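/- Let 𝔽 ⊆ 𝔻 be finite and let (h,i) ∈ 𝔽 be 𝔽-admissible (its successors (h+1,2i−1) and (h+1,2i) are not in 𝔽). If f = Σ_{(k,j)∈𝔽} x_k^{(j)} χ_k^{(j)} with coefficients x_k^{(j)} in a Banach space X, then there exists an index set 𝔽' with |𝔽'| = |𝔽| + 1 and coefficients y_k^{(j)} ∈ X such that f ∘ φ_h^{(i)} = Σ_{(k,j)∈𝔽'} y_k^{(j)} χ_k^{(j)} and Σ_𝔽 ‖x_k^{(j)}‖² = Σ_{𝔽'} ‖y_k^{(j)}‖². -/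

import Mathlib

open MeasureTheory Real Set
open scoped Classical

noncomputable section

/-- The dyadic interval `Δ_k^{(j)} = [(j-1)/2^k, j/2^k)`. -/
def dyadic (k : ℕ) (j : ℤ) : Set ℝ := Set.Ico (((j : ℝ) - 1) / 2 ^ k) ((j : ℝ) / 2 ^ k)

/-- The Haar function `χ_k^{(j)}`. -/
def haar (k : ℕ) (j : ℤ) (t : ℝ) : ℝ :=
  if t ∈ dyadic k (2 * j - 1) then (2 : ℝ) ^ (((k : ℝ) - 1) / 2)
  else if t ∈ dyadic k (2 * j) then -(2 : ℝ) ^ (((k : ℝ) - 1) / 2)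
  else 0

/-- Membership in the dyadic tree `𝔻`. -/
def memD (kj : ℕ × ℤ) : Prop := 1 ≤ kj.1 ∧ 1 ≤ kj.2 ∧ kj.2 ≤ 2 ^ (kj.1 - 1)

/-- The finite dyadic tree `𝔻_m^n`. -/
def Dtree (m n : ℕ) : Finset (ℕ × ℤ) :=
  (Finset.Icc m n).biUnion fun k => (Finset.Icc (1 : ℤ) (2 ^ (k - 1))).image fun j => (k, j)

/-- Number of indices of `F` lying on the branch through `t`. -/
def branchCount (F : Finset (ℕ × ℤ)) (t : ℝ) : ℕ :=
  (F.filter fun kj => t ∈ dyadic (kj.1 - 1) kj.2).card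

/-- The local height of a finite index set. -/
def lh (F : Finset (ℕ × ℤ)) : ℕ :=
  sSup {m | ∃ t ∈ Set.Ico (0 : ℝ) 1, branchCount F t = m}

/-- The transformation `φ_h^{(i)}` interchanging `Δ_{h+1}^{(4i-2)}` and `Δ_{h+1}^{(4i-1)}`. -/
def phi (h : ℕ) (i : ℤ) (t : ℝ) : ℝ :=
  if t ∈ dyadic (h + 1) (4 * i - 2) then t + 1 / 2 ^ (h + 1)
  else if t ∈ dyadic (h + 1) (4 * i - 1) then t - 1 / 2 ^ (h + 1)
  else t

/-- The Haar type ideal norm `τ(T | ℋ(F))`. -/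
def tau {X Y : Type*} [NormedAddCommGroup X] [NormedSpace ℝ X]
    [NormedAddCommGroup Y] [NormedSpace ℝ Y]
    (T : X →L[ℝ] Y) (F : Finset (ℕ × ℤ)) : ℝ :=
  sInf {c : ℝ | 0 ≤ c ∧ ∀ x : ℕ × ℤ → X,
    Real.sqrt (∫ t in Set.Ico (0 : ℝ) 1, ‖∑ kj ∈ F, haar kj.1 kj.2 t • T (x kj)‖ ^ 2)
      ≤ c * Real.sqrt (∑ kj ∈ F, ‖x kj‖ ^ 2)}

end

section Helpers

lemma mem_dyadic_iff (k : ℕ) (j : ℤ) (t : ℝ) :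
    t ∈ dyadic k j ↔ ⌊t * 2 ^ k⌋ = j - 1 := by
  have hpos : (0:ℝ) < 2 ^ k := by positivity
  rw [dyadic, Set.mem_Ico, div_le_iff₀ hpos, lt_div_iff₀ hpos, Int.floor_eq_iff]
  push_cast
  constructor <;> rintro ⟨a, b⟩ <;> exact ⟨by linarith, by linarith⟩

lemma haar_eq_floor (k : ℕ) (j : ℤ) (t : ℝ) :
    haar k j t =
      if ⌊t * 2 ^ k⌋ = 2 * j - 2 then (2:ℝ) ^ (((k:ℝ) - 1) / 2)
      else if ⌊t * 2 ^ k⌋ = 2 * j - 1 then -(2:ℝ) ^ (((k:ℝ) - 1) / 2)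
      else 0 := by
  rw [haar, mem_dyadic_iff, mem_dyadic_iff, show 2*j-1-1 = 2*j-2 by ring]; congr

lemma haar_congr (k : ℕ) (j : ℤ) {t s : ℝ} (h : ⌊t * 2 ^ k⌋ = ⌊s * 2 ^ k⌋) :
    haar k j t = haar k j s := by
  rw [haar_eq_floor, haar_eq_floor, h]

lemma haar_zero (k : ℕ) (j : ℤ) (t : ℝ) (h1 : ⌊t * 2 ^ k⌋ ≠ 2 * j - 2)
    (h2 : ⌊t * 2 ^ k⌋ ≠ 2 * j - 1) : haar k j t = 0 := by
  rw [haar_eq_floor, if_neg h1, if_neg h2]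

lemma phi_eq_floor (h : ℕ) (i : ℤ) (t : ℝ) :
    phi h i t =
      if ⌊t * 2 ^ (h+1)⌋ = 4 * i - 3 then t + 1 / 2 ^ (h+1)
      else if ⌊t * 2 ^ (h+1)⌋ = 4 * i - 2 then t - 1 / 2 ^ (h+1)
      else t := by
  rw [phi, mem_dyadic_iff, mem_dyadic_iff, show 4*i-2-1 = 4*i-3 by ring,
    show 4*i-1-1 = 4*i-2 by ring]; congr

lemma floor_shift (k : ℕ) (m : ℤ) (t : ℝ) :
    ⌊(t + m / 2 ^ k) * 2 ^ k⌋ = ⌊t * 2 ^ k⌋ + m := by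
  have hne : (2:ℝ) ^ k ≠ 0 := by positivity
  have : (t + m / 2 ^ k) * 2 ^ k = t * 2 ^ k + m := by field_simp
  rw [this, Int.floor_add_intCast]

lemma haar_shift (k : ℕ) (j m : ℤ) (t : ℝ) :
    haar k (j + m) t = haar k j (t - 2 * m / 2 ^ k) := by
  have h1 : t - 2 * (m:ℝ) / 2 ^ k = t + ((-(2*m) : ℤ) : ℝ) / 2 ^ k := by push_cast; ring
  rw [haar_eq_floor, haar_eq_floor, h1, floor_shift]
  have e1 : (⌊t * 2 ^ k⌋ + -(2*m) = 2 * j - 2) ↔ (⌊t * 2 ^ k⌋ = 2 * (j+m) - 2) := by omega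
  have e2 : (⌊t * 2 ^ k⌋ + -(2*m) = 2 * j - 1) ↔ (⌊t * 2 ^ k⌋ = 2 * (j+m) - 1) := by omega
  simp only [e1, e2]

end Helpers

noncomputable section

def sigmaMap (h : ℕ) (i : ℤ) (kj : ℕ × ℤ) : ℕ × ℤ :=
  if h + 2 ≤ kj.1 ∧ (4*i-3) * 2^(kj.1-h-2) < kj.2 ∧ kj.2 ≤ (4*i-2) * 2^(kj.1-h-2) then
    (kj.1, kj.2 + 2^(kj.1-h-2))
  else if h + 2 ≤ kj.1 ∧ (4*i-2) * 2^(kj.1-h-2) < kj.2 ∧ kj.2 ≤ (4*i-1) * 2^(kj.1-h-2) then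
    (kj.1, kj.2 - 2^(kj.1-h-2))
  else kj

end

lemma sigma_fst (h : ℕ) (i : ℤ) (kj : ℕ × ℤ) : (sigmaMap h i kj).1 = kj.1 := by
  rw [sigmaMap]; split_ifs <;> rfl

lemma sigma_fixed (h : ℕ) (i : ℤ) (kj : ℕ × ℤ) (hk : kj.1 < h + 2) :
    sigmaMap h i kj = kj := by
  rw [sigmaMap, if_neg, if_neg] <;> rintro ⟨a, -⟩ <;> omega

lemma sigma_eq_add (h : ℕ) (i : ℤ) (k : ℕ) (j : ℤ) (hk : h + 2 ≤ k)
    (h1 : (4*i-3) * 2^(k-h-2) < j) (h2 : j ≤ (4*i-2) * 2^(k-h-2)) :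
    sigmaMap h i (k, j) = (k, j + 2^(k-h-2)) := by
  rw [sigmaMap, if_pos ⟨hk, h1, h2⟩]

lemma sigma_eq_sub (h : ℕ) (i : ℤ) (k : ℕ) (j : ℤ) (hk : h + 2 ≤ k)
    (h1 : (4*i-2) * 2^(k-h-2) < j) (h2 : j ≤ (4*i-1) * 2^(k-h-2)) :
    sigmaMap h i (k, j) = (k, j - 2^(k-h-2)) := by
  rw [sigmaMap, if_neg, if_pos ⟨hk, h1, h2⟩]
  rintro ⟨-, ha, hb⟩
  simp only at ha hb
  have hd : (0:ℤ) < 2^(k-h-2) := by positivity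
  linarith

lemma sigma_eq_id (h : ℕ) (i : ℤ) (k : ℕ) (j : ℤ)
    (hout : j ≤ (4*i-3) * 2^(k-h-2) ∨ (4*i-1) * 2^(k-h-2) < j) :
    sigmaMap h i (k, j) = (k, j) := by
  have hd : (0:ℤ) < 2^(k-h-2) := by positivity
  rw [sigmaMap, if_neg, if_neg] <;> rintro ⟨-, ha, hb⟩ <;> simp only at ha hb <;>
    rcases hout with hc | hc <;> linarith

lemma sigma_invol (h : ℕ) (i : ℤ) : Function.Involutive (sigmaMap h i) := by
  rintro ⟨k, j⟩
  have hd : (0:ℤ) < 2^(k-h-2) := by positivity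
  by_cases hk : h + 2 ≤ k
  · set d : ℤ := 2^(k-h-2) with hdd
    by_cases hC2 : (4*i-3) * d < j ∧ j ≤ (4*i-2) * d
    · rw [sigma_eq_add h i k j hk hC2.1 hC2.2, sigma_eq_sub h i k (j + d) hk
        (by linarith [hC2.1]) (by linarith [hC2.2])]
      simp [hdd]
    · by_cases hC3 : (4*i-2) * d < j ∧ j ≤ (4*i-1) * d
      · rw [sigma_eq_sub h i k j hk hC3.1 hC3.2, sigma_eq_add h i k (j - d) hk
          (by linarith [hC3.1]) (by linarith [hC3.2])]
        simp [hdd]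
      · have hout : j ≤ (4*i-3) * d ∨ (4*i-1) * d < j := by
          by_contra hcon
          push_neg at hcon
          rcases le_or_gt j ((4*i-2)*d) with hc | hc
          · exact hC2 ⟨hcon.1, hc⟩
          · exact hC3 ⟨hc, hcon.2⟩
        rw [sigma_eq_id h i k j hout, sigma_eq_id h i k j hout]
  · have h1 : sigmaMap h i (k, j) = (k, j) := sigma_fixed h i _ (by omega)
    rw [h1, h1]

lemma floor_bounds {r : ℝ} {n : ℤ} (hn : ⌊r⌋ = n) : (n:ℝ) ≤ r ∧ r < n + 1 :=
  Int.floor_eq_iff.mp hn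

lemma floor_eq_of {r : ℝ} {n : ℤ} (h1 : (n:ℝ) ≤ r) (h2 : r < n + 1) : ⌊r⌋ = n :=
  Int.floor_eq_iff.mpr ⟨h1, h2⟩

lemma haar_phi_self (h : ℕ) (i : ℤ) (t : ℝ) :
    haar h i (phi h i t) =
      (Real.sqrt 2)⁻¹ * (haar (h+1) (2*i-1) t + haar (h+1) (2*i) t) := by
  have h2h : (0:ℝ) < 2 ^ (h+1) := by positivity
  have hvv : (Real.sqrt 2)⁻¹ * (2:ℝ) ^ ((((h+1:ℕ):ℝ) - 1) / 2)
      = (2:ℝ) ^ (((h:ℝ) - 1) / 2) := by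
    have hx : (((h+1:ℕ):ℝ) - 1) / 2 = ((h:ℝ) - 1) / 2 + 1/2 := by push_cast; ring
    have hy : (0:ℝ) < (2:ℝ) ^ ((1:ℝ)/2) := Real.rpow_pos_of_pos (by norm_num) _
    rw [hx, Real.rpow_add (by norm_num), Real.sqrt_eq_rpow]
    field_simp
  have hq : t * 2 ^ (h+1) = (t * 2 ^ h) * 2 := by rw [pow_succ]; ring
  have hc : (1 / 2 ^ (h+1) : ℝ) * 2 ^ h = 1/2 := by
    rw [pow_succ]; field_simp
  rw [phi_eq_floor]
  split_ifs with hn1 hn2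
  · obtain ⟨hr1, hr2⟩ := floor_bounds hn1
    push_cast at hr1 hr2
    have hf : ⌊(t + 1 / 2 ^ (h+1)) * 2 ^ h⌋ = 2*i-1 := by
      apply floor_eq_of <;> push_cast <;>
        [nlinarith [hq, hc]; nlinarith [hq, hc]]
    rw [haar_eq_floor, haar_eq_floor, haar_eq_floor, hf, hn1]
    split_ifs <;> first
      | omega
      | linear_combination hvv
      | linear_combination -hvv
      | norm_num
  · obtain ⟨hr1, hr2⟩ := floor_bounds hn2
    push_cast at hr1 hr2
    have hf : ⌊(t - 1 / 2 ^ (h+1)) * 2 ^ h⌋ = 2*i-2 := by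
      apply floor_eq_of <;> push_cast <;>
        [nlinarith [hq, hc]; nlinarith [hq, hc]]
    rw [haar_eq_floor, haar_eq_floor, haar_eq_floor, hf, hn2]
    split_ifs <;> first
      | omega
      | linear_combination hvv
      | linear_combination -hvv
      | norm_num
  · set n := ⌊t * 2 ^ (h+1)⌋ with hn
    set m := ⌊t * 2 ^ h⌋ with hm
    have hb1 := floor_bounds hn.symm
    have hb2 := floor_bounds hm.symm
    have hmn : 2*m ≤ n ∧ n ≤ 2*m + 1 := by
      constructor
      · have : ((2*m : ℤ):ℝ) ≤ t * 2^(h+1) := by push_cast; nlinarith [hb2.1]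
        exact Int.le_floor.mpr this
      · have h2 : n < 2*m+2 := Int.floor_lt.mpr (by push_cast; nlinarith [hb2.2])
        omega
    rw [haar_eq_floor, haar_eq_floor, haar_eq_floor, ← hn, ← hm]
    split_ifs <;> first
      | omega
      | linear_combination hvv
      | linear_combination -hvv
      | norm_num

set_option maxHeartbeats 2000000 in
lemma haar_phi (h : ℕ) (i : ℤ) (k : ℕ) (j : ℤ) (t : ℝ)
    (hne : ¬(k = h ∧ j = i)) (hne1 : ¬(k = h + 1 ∧ j = 2*i-1))
    (hne2 : ¬(k = h + 1 ∧ j = 2*i)) :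
    haar k j (phi h i t) = haar (sigmaMap h i (k, j)).1 (sigmaMap h i (k, j)).2 t := by
  have h2h : (0:ℝ) < 2 ^ (h+1) := by positivity
  by_cases hk2 : h + 2 ≤ k
  · -- high levels
    obtain ⟨e, rfl⟩ : ∃ e, k = h + 2 + e := ⟨k - (h+2), by omega⟩
    have hke : h + 2 + e - h - 2 = e := by omega
    have hdZ : (0:ℤ) < 2^e := by positivity
    have hdR : (0:ℝ) < (2:ℝ)^e := by positivity
    have hcast : (((2:ℤ)^e : ℤ) : ℝ) = (2:ℝ)^e := by push_cast; ring
    have hpow : (2:ℝ)^(h+2+e) = 2^(h+1) * (2 * 2^e) := by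
      rw [show h+2+e = (h+1) + (e+1) by ring, pow_add, pow_succ]; ring
    have hsplit : ∀ s : ℝ, s * 2^(h+2+e) = (s * 2^(h+1)) * (2 * 2^e) := by
      intro s; rw [hpow]; ring
    have hplus : (t + 1/2^(h+1)) * 2^(h+1) = t * 2^(h+1) + 1 := by field_simp
    have hminus : (t - 1/2^(h+1)) * 2^(h+1) = t * 2^(h+1) - 1 := by field_simp
    by_cases hC2 : (4*i-3) * 2^e < j ∧ j ≤ (4*i-2) * 2^e
    · rw [show sigmaMap h i (h+2+e, j) = (h+2+e, j + 2^e) by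
        rw [sigma_eq_add h i (h+2+e) j hk2 (by rw [hke]; exact hC2.1)
          (by rw [hke]; exact hC2.2), hke]]
      show haar (h+2+e) j (phi h i t) = haar (h+2+e) (j + 2^e) t
      rw [haar_shift (h+2+e) j (2^e) t]
      have harg : t - 2*(((2:ℤ)^e : ℤ):ℝ)/2^(h+2+e) = t - 1/2^(h+1) := by
        rw [hcast, hpow]; field_simp
      rw [harg, phi_eq_floor]
      -- key : in-range floors at level h+1
      have key : ∀ s : ℝ, (⌊s * 2^(h+2+e)⌋ = 2*j-2 ∨ ⌊s * 2^(h+2+e)⌋ = 2*j-1) →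
          ⌊s * 2^(h+1)⌋ = 4*i-3 := by
        intro s habs
        have hb : (2*(j:ℝ)-2) ≤ s * 2^(h+2+e) ∧ s * 2^(h+2+e) < 2*(j:ℝ) := by
          rcases habs with habs | habs <;> obtain ⟨u1, u2⟩ := floor_bounds habs <;>
            push_cast at u1 u2 <;> constructor <;> linarith
        have hl : ((4*i-3 : ℤ):ℝ) * (2 * 2^e) ≤ (s * 2^(h+1)) * (2 * 2^e) := by
          rw [← hsplit]
          calc ((4*i-3 : ℤ):ℝ) * (2 * 2^e) ≤ 2*(j:ℝ)-2 := by
                have h' : (((4*i-3) * 2^e + 1 : ℤ) : ℝ) ≤ (j:ℝ) := by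
                  exact_mod_cast hC2.1
                push_cast at h' ⊢; linarith
            _ ≤ s * 2^(h+2+e) := hb.1
        have hu : (s * 2^(h+1)) * (2 * 2^e) < ((4*i-2 : ℤ):ℝ) * (2 * 2^e) := by
          rw [← hsplit]
          calc s * 2^(h+2+e) < 2*(j:ℝ) := hb.2
            _ ≤ ((4*i-2 : ℤ):ℝ) * (2 * 2^e) := by
                have h' : ((j:ℤ) : ℝ) ≤ (((4*i-2) * 2^e : ℤ) : ℝ) := by
                  exact_mod_cast hC2.2
                push_cast at h' ⊢; linarith
        have hl' : ((4*i-3 : ℤ):ℝ) ≤ s * 2^(h+1) :=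
          (mul_le_mul_iff_left₀ (by positivity)).mp hl
        have hu' : s * 2^(h+1) < ((4*i-2 : ℤ):ℝ) :=
          (mul_lt_mul_iff_left₀ (by positivity)).mp hu
        apply floor_eq_of <;> push_cast at hl' hu' ⊢ <;> linarith
      split_ifs with hn1 hn2
      · -- t in Q2 : both sides vanish
        have hz1 : haar (h+2+e) j (t + 1/2^(h+1)) = 0 := by
          apply haar_zero <;> intro habs <;>
          · have := key _ (by tauto)
            have hfs : ⌊(t + 1/2^(h+1)) * 2^(h+1)⌋ = ⌊t * 2^(h+1)⌋ + 1 := by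
              rw [show t + 1/2^(h+1) = t + ((1:ℤ):ℝ)/2^(h+1) by push_cast; ring,
                floor_shift]
            rw [hfs, hn1] at this; omega
        have hz2 : haar (h+2+e) j (t - 1/2^(h+1)) = 0 := by
          apply haar_zero <;> intro habs <;>
          · have := key _ (by tauto)
            have hfs : ⌊(t - 1/2^(h+1)) * 2^(h+1)⌋ = ⌊t * 2^(h+1)⌋ + (-1) := by
              rw [show t - 1/2^(h+1) = t + ((-1:ℤ):ℝ)/2^(h+1) by push_cast; ring,
                floor_shift]
            rw [hfs, hn1] at this; omega
        rw [hz1, hz2]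
      · rfl
      · have hz1 : haar (h+2+e) j t = 0 := by
          apply haar_zero <;> intro habs <;> exact hn1 (key _ (by tauto))
        have hz2 : haar (h+2+e) j (t - 1/2^(h+1)) = 0 := by
          apply haar_zero <;> intro habs <;>
          · have := key _ (by tauto)
            have hfs : ⌊(t - 1/2^(h+1)) * 2^(h+1)⌋ = ⌊t * 2^(h+1)⌋ + (-1) := by
              rw [show t - 1/2^(h+1) = t + ((-1:ℤ):ℝ)/2^(h+1) by push_cast; ring,
                floor_shift]
            rw [hfs] at this
            exact hn2 (by omega)
        rw [hz1, hz2]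
    · by_cases hC3 : (4*i-2) * 2^e < j ∧ j ≤ (4*i-1) * 2^e
      · rw [show sigmaMap h i (h+2+e, j) = (h+2+e, j - 2^e) by
          rw [sigma_eq_sub h i (h+2+e) j hk2 (by rw [hke]; exact hC3.1)
            (by rw [hke]; exact hC3.2), hke]]
        show haar (h+2+e) j (phi h i t) = haar (h+2+e) (j - 2^e) t
        rw [show j - 2^e = j + (-(2^e)) by ring, haar_shift (h+2+e) j (-(2^e)) t]
        have harg : t - 2*(((-(2^e) : ℤ)) : ℝ)/2^(h+2+e) = t + 1/2^(h+1) := by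
          push_cast
          rw [hpow]; field_simp; ring
        rw [harg, phi_eq_floor]
        have key : ∀ s : ℝ, (⌊s * 2^(h+2+e)⌋ = 2*j-2 ∨ ⌊s * 2^(h+2+e)⌋ = 2*j-1) →
            ⌊s * 2^(h+1)⌋ = 4*i-2 := by
          intro s habs
          have hb : (2*(j:ℝ)-2) ≤ s * 2^(h+2+e) ∧ s * 2^(h+2+e) < 2*(j:ℝ) := by
            rcases habs with habs | habs <;> obtain ⟨u1, u2⟩ := floor_bounds habs <;>
              push_cast at u1 u2 <;> constructor <;> linarith
          have hl : ((4*i-2 : ℤ):ℝ) * (2 * 2^e) ≤ (s * 2^(h+1)) * (2 * 2^e) := by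
            rw [← hsplit]
            calc ((4*i-2 : ℤ):ℝ) * (2 * 2^e) ≤ 2*(j:ℝ)-2 := by
                  have h' : (((4*i-2) * 2^e + 1 : ℤ) : ℝ) ≤ (j:ℝ) := by
                    exact_mod_cast hC3.1
                  push_cast at h' ⊢; linarith
              _ ≤ s * 2^(h+2+e) := hb.1
          have hu : (s * 2^(h+1)) * (2 * 2^e) < ((4*i-1 : ℤ):ℝ) * (2 * 2^e) := by
            rw [← hsplit]
            calc s * 2^(h+2+e) < 2*(j:ℝ) := hb.2
              _ ≤ ((4*i-1 : ℤ):ℝ) * (2 * 2^e) := by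
                  have h' : ((j:ℤ) : ℝ) ≤ (((4*i-1) * 2^e : ℤ) : ℝ) := by
                    exact_mod_cast hC3.2
                  push_cast at h' ⊢; linarith
          have hl' : ((4*i-2 : ℤ):ℝ) ≤ s * 2^(h+1) :=
            (mul_le_mul_iff_left₀ (by positivity)).mp hl
          have hu' : s * 2^(h+1) < ((4*i-1 : ℤ):ℝ) :=
            (mul_lt_mul_iff_left₀ (by positivity)).mp hu
          apply floor_eq_of <;> push_cast at hl' hu' ⊢ <;> linarith
        split_ifs with hn1 hn2
        · rfl
        · have hz1 : haar (h+2+e) j (t - 1/2^(h+1)) = 0 := by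
            apply haar_zero <;> intro habs <;>
            · have := key _ (by tauto)
              have hfs : ⌊(t - 1/2^(h+1)) * 2^(h+1)⌋ = ⌊t * 2^(h+1)⌋ + (-1) := by
                rw [show t - 1/2^(h+1) = t + ((-1:ℤ):ℝ)/2^(h+1) by push_cast; ring,
                  floor_shift]
              rw [hfs, hn2] at this; omega
          have hz2 : haar (h+2+e) j (t + 1/2^(h+1)) = 0 := by
            apply haar_zero <;> intro habs <;>
            · have := key _ (by tauto)
              have hfs : ⌊(t + 1/2^(h+1)) * 2^(h+1)⌋ = ⌊t * 2^(h+1)⌋ + 1 := by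
                rw [show t + 1/2^(h+1) = t + ((1:ℤ):ℝ)/2^(h+1) by push_cast; ring,
                  floor_shift]
              rw [hfs, hn2] at this; omega
          rw [hz1, hz2]
        · have hz1 : haar (h+2+e) j t = 0 := by
            apply haar_zero <;> intro habs <;> exact hn2 (key _ (by tauto))
          have hz2 : haar (h+2+e) j (t + 1/2^(h+1)) = 0 := by
            apply haar_zero <;> intro habs <;>
            · have := key _ (by tauto)
              have hfs : ⌊(t + 1/2^(h+1)) * 2^(h+1)⌋ = ⌊t * 2^(h+1)⌋ + 1 := by
                rw [show t + 1/2^(h+1) = t + ((1:ℤ):ℝ)/2^(h+1) by push_cast; ring,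
                  floor_shift]
              rw [hfs] at this
              exact hn1 (by omega)
          rw [hz1, hz2]
      · -- support away from the swapped squares
        have hout : j ≤ (4*i-3) * 2^e ∨ (4*i-1) * 2^e < j := by
          by_contra hcon
          push_neg at hcon
          rcases le_or_gt j ((4*i-2) * 2^e) with hc | hc
          · exact hC2 ⟨hcon.1, hc⟩
          · exact hC3 ⟨hc, hcon.2⟩
        rw [show sigmaMap h i (h+2+e, j) = (h+2+e, j) by
          apply sigma_eq_id h i (h+2+e) j; rw [hke]; exact hout]
        show haar (h+2+e) j (phi h i t) = haar (h+2+e) j t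
        have key2 : ∀ s : ℝ, ((4*i-3 : ℤ):ℝ) ≤ s * 2^(h+1) →
            s * 2^(h+1) < ((4*i-1 : ℤ):ℝ) → haar (h+2+e) j s = 0 := by
          intro s hs1 hs2
          apply haar_zero <;> intro habs <;>
          · have hb : (2*(j:ℝ)-2) ≤ s * 2^(h+2+e) ∧ s * 2^(h+2+e) < 2*(j:ℝ) := by
              obtain ⟨u1, u2⟩ := floor_bounds habs
              push_cast at u1 u2 <;> constructor <;> linarith
            rw [hsplit] at hb
            rcases hout with hc | hc
            · have h' : ((j:ℤ) : ℝ) ≤ (((4*i-3) * 2^e : ℤ) : ℝ) := by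
                exact_mod_cast hc
              push_cast at h' hs1
              have hm := mul_le_mul_of_nonneg_right hs1
                (by positivity : (0:ℝ) ≤ 2 * 2^e)
              linarith [hb.2, hm]
            · have h' : (((4*i-1) * 2^e + 1 : ℤ) : ℝ) ≤ (j:ℝ) := by
                exact_mod_cast hc
              push_cast at h' hs2
              have hm := mul_lt_mul_of_pos_right hs2
                (by positivity : (0:ℝ) < 2 * 2^e)
              linarith [hb.1, hm]
        rw [phi_eq_floor]
        split_ifs with hn1 hn2
        · obtain ⟨u1, u2⟩ := floor_bounds hn1
          push_cast at u1 u2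
          rw [key2 t (by push_cast; linarith) (by push_cast; linarith),
            key2 (t + 1/2^(h+1)) (by rw [hplus]; push_cast; linarith)
              (by rw [hplus]; push_cast; linarith)]
        · obtain ⟨u1, u2⟩ := floor_bounds hn2
          push_cast at u1 u2
          rw [key2 t (by push_cast; linarith) (by push_cast; linarith),
            key2 (t - 1/2^(h+1)) (by rw [hminus]; push_cast; linarith)
              (by rw [hminus]; push_cast; linarith)]
        · rfl
  · -- low levels : sigma fixes, haar invariant
    rw [sigma_fixed h i (k, j) (by omega)]
    show haar k j (phi h i t) = haar k j t
    rw [phi_eq_floor]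
    have hplus : (t + 1/2^(h+1)) * 2^(h+1) = t * 2^(h+1) + 1 := by field_simp
    have hminus : (t - 1/2^(h+1)) * 2^(h+1) = t * 2^(h+1) - 1 := by field_simp
    rcases Nat.lt_or_ge k h with hkh | hkh
    · -- k ≤ h - 1 : floors at level k are unchanged
      obtain ⟨f, rfl⟩ : ∃ f, h = k + (f + 1) := ⟨h - 1 - k, by omega⟩
      have hER : (0:ℝ) < (2:ℝ)^(f+2) := by positivity
      have hpow2 : (2:ℝ)^(k+(f+1)+1) = 2^k * 2^(f+2) := by
        rw [show k+(f+1)+1 = k + (f+2) by ring, pow_add]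
      have hE4 : (4:ℤ) ∣ 2^(f+2) := ⟨2^f, by rw [pow_add]; ring⟩
      have hcastE : (((2:ℤ)^(f+2) : ℤ) : ℝ) = (2:ℝ)^(f+2) := by push_cast; ring
      have htu : t * 2^(k+(f+1)+1) = (t * 2^k) * 2^(f+2) := by rw [hpow2]; ring
      have hm1 : (⌊t * 2^k⌋ : ℝ) ≤ t * 2^k := Int.floor_le _
      have hm2 : t * 2^k < ⌊t * 2^k⌋ + 1 := Int.lt_floor_add_one _
      set m := ⌊t * 2^k⌋ with hmdef
      split_ifs with hn1 hn2
      · -- t in Q2, floors coincide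
        obtain ⟨u1, u2⟩ := floor_bounds hn1
        push_cast at u1 u2
        -- (m+1) * E is a multiple of 4 exceeding 4i-3, hence ≥ 4i
        have hstep : (t * 2^k) * 2^(f+2) < ((m:ℝ)+1) * 2^(f+2) :=
          mul_lt_mul_of_pos_right hm2 hER
        have hZ : (4*i-3 : ℤ) < (m+1) * 2^(f+2) := by
          have : ((4*i-3 : ℤ) : ℝ) < (((m+1) * 2^(f+2) : ℤ) : ℝ) := by
            push_cast; rw [← htu] at hstep; linarith [u1]
          exact_mod_cast this
        obtain ⟨q, hq⟩ := (hE4.mul_left (m+1))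
        rw [hq] at hZ
        have hge : (4*i : ℤ) ≤ 4*q := by omega
        have hgeR : ((4*i : ℤ) : ℝ) ≤ ((m:ℝ)+1) * 2^(f+2) := by
          have : ((4*i : ℤ) : ℝ) ≤ ((4*q : ℤ) : ℝ) := by exact_mod_cast hge
          have hqR : ((m:ℝ)+1) * 2^(f+2) = ((4*q : ℤ) : ℝ) := by
            rw [← hcastE]; push_cast [← hq]; ring
          rw [hqR]; exact this
        apply haar_congr
        have hcc : (t + 1/2^(k+(f+1)+1)) * 2^k = t*2^k + 1/2^(f+2) := by
          rw [show k+(f+1)+1 = k + (f+2) by ring, pow_add]; field_simp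
        rw [hcc]
        apply floor_eq_of
        · have : (0:ℝ) < 1/2^(f+2) := by positivity
          linarith
        · have h1 : (t*2^k + 1/2^(f+2)) * 2^(f+2) = (t*2^k) * 2^(f+2) + 1 := by
            field_simp
          have h2 : (t*2^k + 1/2^(f+2)) * 2^(f+2) < (((m:ℝ))+1) * 2^(f+2) := by
            rw [h1, ← htu]; push_cast at hgeR; linarith
          exact (mul_lt_mul_iff_left₀ hER).mp h2
      · -- t in Q3
        obtain ⟨u1, u2⟩ := floor_bounds hn2
        push_cast at u1 u2
        have hstep : ((m:ℝ)) * 2^(f+2) ≤ (t * 2^k) * 2^(f+2) :=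
          mul_le_mul_of_nonneg_right hm1 (le_of_lt hER)
        have hZ : (m * 2^(f+2) : ℤ) < 4*i-1 := by
          have : (((m * 2^(f+2) : ℤ)) : ℝ) < ((4*i-1 : ℤ) : ℝ) := by
            push_cast; rw [← htu] at hstep; linarith
          exact_mod_cast this
        obtain ⟨q, hq⟩ := (hE4.mul_left m)
        rw [hq] at hZ
        have hle : (4*q : ℤ) ≤ 4*i-4 := by omega
        have hleR : ((m:ℝ)) * 2^(f+2) ≤ ((4*i-4 : ℤ) : ℝ) := by
          have : ((4*q : ℤ) : ℝ) ≤ ((4*i-4 : ℤ) : ℝ) := by exact_mod_cast hle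
          have hqR : ((m:ℝ)) * 2^(f+2) = ((4*q : ℤ) : ℝ) := by
            rw [← hcastE]; push_cast [← hq]; ring
          rw [hqR]; exact this
        apply haar_congr
        have hcc : (t - 1/2^(k+(f+1)+1)) * 2^k = t*2^k - 1/2^(f+2) := by
          rw [show k+(f+1)+1 = k + (f+2) by ring, pow_add]; field_simp
        rw [hcc]
        apply floor_eq_of
        · have h1 : (t*2^k - 1/2^(f+2)) * 2^(f+2) = (t*2^k) * 2^(f+2) - 1 := by
            field_simp
          have h2 : ((m:ℝ)) * 2^(f+2) ≤ (t*2^k - 1/2^(f+2)) * 2^(f+2) := by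
            rw [h1, ← htu]; push_cast at hleR; linarith
          exact (mul_le_mul_iff_left₀ hER).mp h2
        · have : (0:ℝ) < 1/2^(f+2) := by positivity
          linarith
      · rfl
    · -- k = h or k = h + 1
      have hk : k = h ∨ k = h + 1 := by omega
      rcases hk with rfl | rfl
      · -- k = h
        have hji : j ≠ i := fun hji => hne ⟨rfl, hji⟩
        have hq : ∀ s : ℝ, s * 2^(k+1) = (s * 2^k) * 2 := by
          intro s; rw [pow_succ]; ring
        split_ifs with hn1 hn2
        · obtain ⟨u1, u2⟩ := floor_bounds hn1
          push_cast at u1 u2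
          have f1 : ⌊t * 2^k⌋ = 2*i-2 := by
            apply floor_eq_of <;> push_cast <;> nlinarith [hq t]
          have f2 : ⌊(t + 1/2^(k+1)) * 2^k⌋ = 2*i-1 := by
            apply floor_eq_of <;> push_cast <;>
              nlinarith [hq (t + 1/2^(k+1)), hplus]
          rw [haar_zero k j _ (by rw [f2]; omega) (by rw [f2]; omega),
            haar_zero k j t (by rw [f1]; omega) (by rw [f1]; omega)]
        · obtain ⟨u1, u2⟩ := floor_bounds hn2
          push_cast at u1 u2
          have f1 : ⌊t * 2^k⌋ = 2*i-1 := by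
            apply floor_eq_of <;> push_cast <;> nlinarith [hq t]
          have f2 : ⌊(t - 1/2^(k+1)) * 2^k⌋ = 2*i-2 := by
            apply floor_eq_of <;> push_cast <;>
              nlinarith [hq (t - 1/2^(k+1)), hminus]
          rw [haar_zero k j _ (by rw [f2]; omega) (by rw [f2]; omega),
            haar_zero k j t (by rw [f1]; omega) (by rw [f1]; omega)]
        · rfl
      · -- k = h + 1
        have hj1 : j ≠ 2*i-1 := fun hj => hne1 ⟨rfl, hj⟩
        have hj2 : j ≠ 2*i := fun hj => hne2 ⟨rfl, hj⟩
        split_ifs with hn1 hn2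
        · have f2 : ⌊(t + 1/2^(h+1)) * 2^(h+1)⌋ = 4*i-2 := by
            rw [show t + 1/2^(h+1) = t + ((1:ℤ):ℝ)/2^(h+1) by push_cast; ring,
              floor_shift, hn1]; ring
          rw [haar_zero (h+1) j _ (by rw [f2]; omega) (by rw [f2]; omega),
            haar_zero (h+1) j t (by rw [hn1]; omega) (by rw [hn1]; omega)]
        · have f2 : ⌊(t - 1/2^(h+1)) * 2^(h+1)⌋ = 4*i-3 := by
            rw [show t - 1/2^(h+1) = t + ((-1:ℤ):ℝ)/2^(h+1) by push_cast; ring,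
              floor_shift, hn2]; ring
          rw [haar_zero (h+1) j _ (by rw [f2]; omega) (by rw [f2]; omega),
            haar_zero (h+1) j t (by rw [hn2]; omega) (by rw [hn2]; omega)]
        · rfl

theorem admissible_transform {X : Type*} [NormedAddCommGroup X] [NormedSpace ℝ X]
    (F : Finset (ℕ × ℤ)) (hF : ∀ kj ∈ F, memD kj) (h : ℕ) (i : ℤ)
    (hmem : (h, i) ∈ F) (hadm1 : (h + 1, 2 * i - 1) ∉ F) (hadm2 : (h + 1, 2 * i) ∉ F)
    (x : ℕ × ℤ → X) :
    ∃ (F' : Finset (ℕ × ℤ)) (y : ℕ × ℤ → X),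
      F'.card = F.card + 1 ∧
      (∀ t ∈ Set.Ico (0 : ℝ) 1,
        ∑ kj ∈ F, haar kj.1 kj.2 (phi h i t) • x kj =
          ∑ kj ∈ F', haar kj.1 kj.2 t • y kj) ∧
      ∑ kj ∈ F, ‖x kj‖ ^ 2 = ∑ kj ∈ F', ‖y kj‖ ^ 2 := by
  classical
  have hinj := (sigma_invol h i).injective
  set G := F.erase (h, i) with hGdef
  have hGmem : ∀ p ∈ G, sigmaMap h i p ≠ (h+1, 2*i-1) ∧ sigmaMap h i p ≠ (h+1, 2*i) := by
    intro p hp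
    by_cases hp1 : p.1 = h + 1
    · have hfix : sigmaMap h i p = p := sigma_fixed h i p (by omega)
      have hpF : p ∈ F := Finset.mem_of_mem_erase hp
      constructor <;> intro hcon <;> rw [hfix] at hcon <;> subst hcon
      · exact hadm1 hpF
      · exact hadm2 hpF
    · have hfst := sigma_fst h i p
      constructor <;> intro hcon <;> rw [hcon] at hfst <;> simp at hfst <;> omega
  have hn1 : (h+1, 2*i) ∉ G.image (sigmaMap h i) := by
    intro hcon
    obtain ⟨p, hp, hps⟩ := Finset.mem_image.mp hcon
    exact (hGmem p hp).2 hps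
  have hn2 : (h+1, 2*i-1) ∉ insert (h+1, 2*i) (G.image (sigmaMap h i)) := by
    intro hcon
    rcases Finset.mem_insert.mp hcon with hcon | hcon
    · rw [Prod.mk.injEq] at hcon; omega
    · obtain ⟨p, hp, hps⟩ := Finset.mem_image.mp hcon
      exact (hGmem p hp).1 hps
  set y : ℕ × ℤ → X := fun kj =>
    if kj = (h+1, 2*i-1) ∨ kj = (h+1, 2*i) then (Real.sqrt 2)⁻¹ • x (h, i)
    else x (sigmaMap h i kj) with hydef
  have hy1 : y (h+1, 2*i-1) = (Real.sqrt 2)⁻¹ • x (h, i) := by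
    rw [hydef]; simp
  have hy2 : y (h+1, 2*i) = (Real.sqrt 2)⁻¹ • x (h, i) := by
    rw [hydef]; simp
  have hy3 : ∀ p ∈ G, y (sigmaMap h i p) = x p := by
    intro p hp
    rw [hydef]
    simp only
    rw [if_neg (not_or.mpr (hGmem p hp)), sigma_invol h i p]
  have hsum_im : ∀ g : ℕ × ℤ → X,
      ∑ q ∈ G.image (sigmaMap h i), g q = ∑ p ∈ G, g (sigmaMap h i p) := by
    intro g
    exact Finset.sum_image (fun p _ q _ hpq => hinj hpq)
  have hterm : ∀ p ∈ G, ¬(p.1 = h ∧ p.2 = i) ∧ ¬(p.1 = h + 1 ∧ p.2 = 2*i-1) ∧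
      ¬(p.1 = h + 1 ∧ p.2 = 2*i) := by
    intro p hp
    have hpF : p ∈ F := Finset.mem_of_mem_erase hp
    have hpne : p ≠ (h, i) := (Finset.mem_erase.mp hp).1
    refine ⟨fun hc => hpne ?_, fun hc => hadm1 ?_, fun hc => hadm2 ?_⟩
    · exact Prod.ext_iff.mpr hc
    · have hpe : p = (h+1, 2*i-1) := Prod.ext_iff.mpr hc
      rwa [hpe] at hpF
    · have hpe : p = (h+1, 2*i) := Prod.ext_iff.mpr hc
      rwa [hpe] at hpF
  refine ⟨insert (h+1, 2*i-1) (insert (h+1, 2*i) (G.image (sigmaMap h i))), y, ?_, ?_, ?_⟩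
  · rw [Finset.card_insert_of_notMem hn2, Finset.card_insert_of_notMem hn1,
      Finset.card_image_of_injective _ hinj, hGdef, Finset.card_erase_of_mem hmem]
    have : 1 ≤ F.card := Finset.card_pos.mpr ⟨_, hmem⟩
    omega
  · intro t _
    rw [← Finset.add_sum_erase F _ hmem, Finset.sum_insert hn2, Finset.sum_insert hn1,
      hsum_im, ← hGdef, hy1, hy2]
    have hG2 : ∑ p ∈ G, haar p.1 p.2 (phi h i t) • x p
        = ∑ p ∈ G, haar (sigmaMap h i p).1 (sigmaMap h i p).2 t • y (sigmaMap h i p) := by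
      refine Finset.sum_congr rfl fun p hp => ?_
      obtain ⟨c1, c2, c3⟩ := hterm p hp
      rw [hy3 p hp, haar_phi h i p.1 p.2 t c1 c2 c3]
    rw [hG2, haar_phi_self h i t]
    have hsmul : ((Real.sqrt 2)⁻¹ * (haar (h+1) (2*i-1) t + haar (h+1) (2*i) t)) • x (h, i)
        = haar (h+1) (2*i-1) t • (Real.sqrt 2)⁻¹ • x (h, i)
          + haar (h+1) (2*i) t • (Real.sqrt 2)⁻¹ • x (h, i) := by
      rw [smul_smul, smul_smul, ← add_smul]
      congr 1
      ring
    rw [hsmul]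
    abel
  · rw [← Finset.add_sum_erase F _ hmem, Finset.sum_insert hn2, Finset.sum_insert hn1,
      show (∑ q ∈ G.image (sigmaMap h i), ‖y q‖^2) = ∑ p ∈ G, ‖y (sigmaMap h i p)‖^2
        from Finset.sum_image (fun p _ q _ hpq => hinj hpq),
      ← hGdef, hy1, hy2]
    have hG2 : ∑ p ∈ G, ‖y (sigmaMap h i p)‖ ^ 2 = ∑ p ∈ G, ‖x p‖ ^ 2 :=
      Finset.sum_congr rfl fun p hp => by rw [hy3 p hp]
    rw [hG2]
    have hhalf : ‖(Real.sqrt 2)⁻¹ • x (h, i)‖ ^ 2 = (1/2) * ‖x (h, i)‖ ^ 2 := by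
      rw [norm_smul, Real.norm_eq_abs, abs_of_nonneg (by positivity), mul_pow,
        inv_pow, Real.sq_sqrt (by norm_num : (0:ℝ) ≤ 2)]
      ring
    rw [hhalf]
    ring
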